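/- Let 0 < c₀ < c, a₀ > 0, 0 < d₁ ≤ d₀ and T' > 0, let x ∈ ℝ³, and let a : ℝ → ℝ³ be twice continuously differentiable with ‖deriv a t‖ ≤ c₀, ‖deriv (deriv a) t‖ ≤ a₀ and d₁ ≤ ‖x - a t‖ ≤ d₀ for all t. Let f : ℝ → ℝ³ be continuously differentiable, ν ∈ ℝ³, and let Hν be the tangential field of the orbit a. Then Hν is differentiable at every point s = g t with t ∈ (0, T'), and its derivative there satisfies (4π/c) · ‖deriv Hν (g t)‖_∞ ≤ (c/(d₁·(c−c₀)²)) · sup_{r∈[0,T']} ‖deriv (fun r ↦ f r ×₃ ν) r‖_∞ + (c·c₀/(d₁²·(c−c₀)²)) · sup_{r∈[0,T']} ‖f r ×₃ ν‖_∞ + (c·(a₀ + 2c₀²/d₁)/(d₁·(c−c₀)³)) · sup_{r∈[0,T']} ‖f r ×₃ ν‖_∞. -/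

import Mathlib

noncomputable section

abbrev E3 := EuclideanSpace ℝ (Fin 3)

/-- The cross product on `ℝ³`. -/
def cross3 (u v : E3) : E3 :=
  WithLp.toLp 2 ![u 1 * v 2 - u 2 * v 1, u 2 * v 0 - u 0 * v 2, u 0 * v 1 - u 1 * v 0]

/-- The maximum norm `‖y‖_∞ = maximum over i of |y i|` on `ℝ³`. -/
def ninf (y : E3) : ℝ := ⨆ i : Fin 3, |y i|

/-- `Hν` is the tangential field of the orbit `a` (relative to the observation point `x`,
the source profile `f` and the vector `ν`, with wave speed `c`). -/
def tangentialField (c : ℝ) (x : E3) (a f : ℝ → E3) (ν : E3) (Hν : ℝ → E3) : Prop :=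
  (∀ s : ℝ, s < ‖x - a 0‖ / c → Hν s = 0) ∧
  (∀ t : ℝ, 0 ≤ t →
    Hν (t + ‖x - a t‖ / c) =
      (c / (4 * Real.pi * ‖x - a t‖ * (c + deriv (fun r : ℝ => ‖x - a r‖) t))) •
        cross3 (f t) ν)

/-!
Write `v r = ‖x - a r‖` and `g r = r + v r / c`. Since `|v'| ≤ ‖a'‖ ≤ c₀ < c`, the retarded time
`g` has derivative `1 + v' / c > 0`, so it is a local diffeomorphism and near `g t` the field is
`Hν = F ∘ g⁻¹` with `F r = (c / (4π v r (c + v' r))) • (f r ×₃ ν)`. The chain rule gives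
`Hν' (g t) = F' t / g' t`, and the weights in this expression are controlled by `v ≥ d₁`,
`|v'| ≤ c₀` and `|v''| ≤ ‖a''‖ + ‖a'‖² / v`.
-/

open scoped RealInnerProductSpace Topology
open Filter

theorem ninf_eq_norm_ofLp (y : E3) : ninf y = ‖WithLp.ofLp y‖ := by
  have hbdd : BddAbove (Set.range fun i : Fin 3 => |y i|) := (Set.finite_range _).bddAbove
  refine le_antisymm (ciSup_le fun i => norm_le_pi_norm (WithLp.ofLp y) i) ?_
  refine (pi_norm_le_iff_of_nonneg ((abs_nonneg (y 0)).trans (le_ciSup hbdd 0))).2 fun i => ?_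
  exact le_ciSup hbdd i

theorem ninf_nonneg (y : E3) : 0 ≤ ninf y := by
  rw [ninf_eq_norm_ofLp]; positivity

theorem ninf_sub_le (u v : E3) : ninf (u - v) ≤ ninf u + ninf v := by
  simpa only [ninf_eq_norm_ofLp, WithLp.ofLp_sub] using norm_sub_le _ _

theorem ninf_smul (r : ℝ) (u : E3) : ninf (r • u) = |r| * ninf u := by
  simp only [ninf_eq_norm_ofLp, WithLp.ofLp_smul, norm_smul, Real.norm_eq_abs]

theorem continuous_ninf : Continuous ninf := by
  simp only [funext ninf_eq_norm_ofLp]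
  exact continuous_norm.comp (PiLp.continuous_ofLp 2 _)

def cross3CLM (ν : E3) : E3 →L[ℝ] E3 :=
  LinearMap.toContinuousLinearMap
  { toFun := fun u => cross3 u ν
    map_add' := fun u v => by
      ext i; fin_cases i <;> simp [cross3] <;> ring
    map_smul' := fun m u => by
      ext i; fin_cases i <;> simp [cross3] <;> ring }

section NormAlongCurve

variable {E : Type*} [NormedAddCommGroup E] [InnerProductSpace ℝ E]

theorem abs_inner_div_norm_le (u u' : E) : |⟪u, u'⟫ / ‖u‖| ≤ ‖u'‖ := by
  rw [abs_div, abs_norm]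
  rcases (norm_nonneg u).eq_or_lt with hu | hu
  · rw [← hu, div_zero]; exact norm_nonneg _
  · rw [div_le_iff₀ hu, mul_comm]; exact abs_real_inner_le_norm u u'

theorem HasDerivAt.norm {w : ℝ → E} {w' : E} {r : ℝ} (hw : HasDerivAt w w' r) (h0 : w r ≠ 0) :
    HasDerivAt (fun s => ‖w s‖) (⟪w r, w'⟫ / ‖w r‖) r := by
  have hsq : ‖w r‖ ^ 2 ≠ 0 := by positivity
  convert (hw.norm_sq.sqrt hsq) using 1
  · simp only [Real.sqrt_sq (norm_nonneg _)]
  · rw [Real.sqrt_sq (norm_nonneg _)]; ring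

theorem abs_deriv_norm_le {w : ℝ → E} {r : ℝ} (hw : DifferentiableAt ℝ w r) (h0 : w r ≠ 0) :
    |deriv (fun s => ‖w s‖) r| ≤ ‖deriv w r‖ := by
  rw [(hw.hasDerivAt.norm h0).deriv]
  exact abs_inner_div_norm_le _ _

theorem abs_deriv_deriv_norm_le {w : ℝ → E} (hw : ContDiff ℝ 2 w) (h0 : ∀ s, w s ≠ 0) (r : ℝ) :
    |deriv (deriv fun s => ‖w s‖) r| ≤ ‖deriv (deriv w) r‖ + ‖deriv w r‖ ^ 2 / ‖w r‖ := by
  have hw₁ : ∀ s, HasDerivAt w (deriv w s) s := fun s =>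
    (hw.differentiable two_ne_zero s).hasDerivAt
  have hw₂ : HasDerivAt (deriv w) (deriv (deriv w) r) r :=
    ((hw.iterate_deriv' 1 1).differentiable one_ne_zero r).hasDerivAt
  have hn : ‖w r‖ ≠ 0 := norm_ne_zero_iff.2 (h0 r)
  have hderiv : deriv (fun s => ‖w s‖) = fun s => ⟪w s, deriv w s⟫ / ‖w s‖ :=
    funext fun s => ((hw₁ s).norm (h0 s)).deriv
  set m := ⟪w r, deriv w r⟫ / ‖w r‖
  -- `m` is the radial speed, so `‖w'‖² - m²` is the squared tangential speed.
  have hm : m ^ 2 ≤ ‖deriv w r‖ ^ 2 := sq_le_sq' (abs_le.1 (abs_inner_div_norm_le _ _)).1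
    (abs_le.1 (abs_inner_div_norm_le _ _)).2
  have hsplit : deriv (deriv fun s => ‖w s‖) r =
      ⟪w r, deriv (deriv w) r⟫ / ‖w r‖ + (‖deriv w r‖ ^ 2 - m ^ 2) / ‖w r‖ := by
    rw [hderiv, (((hw₁ r).inner ℝ hw₂).fun_div ((hw₁ r).norm (h0 r)) hn).deriv,
      real_inner_self_eq_norm_sq]
    simp only [m]
    field_simp
    ring
  rw [hsplit]
  refine (abs_add_le _ _).trans (add_le_add (abs_inner_div_norm_le _ _) ?_)
  rw [abs_div, abs_norm, abs_of_nonneg (sub_nonneg.2 hm)]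
  gcongr
  linarith [sq_nonneg m]

theorem abs_deriv_norm_sub_le {x : E} {a : ℝ → E} {r : ℝ} (ha : DifferentiableAt ℝ a r)
    (hx : x ≠ a r) : |deriv (fun s => ‖x - a s‖) r| ≤ ‖deriv a r‖ := by
  simpa only [deriv_const_sub, norm_neg] using
    abs_deriv_norm_le (ha.const_sub x) (sub_ne_zero.2 hx)

theorem abs_deriv_deriv_norm_sub_le {x : E} {a : ℝ → E} (ha : ContDiff ℝ 2 a)
    (hx : ∀ s, x ≠ a s) (r : ℝ) :
    |deriv (deriv fun s => ‖x - a s‖) r| ≤ ‖deriv (deriv a) r‖ + ‖deriv a r‖ ^ 2 / ‖x - a r‖ := by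
  simpa only [deriv_const_sub', deriv.fun_neg, norm_neg] using
    abs_deriv_deriv_norm_le (contDiff_const.sub ha) (fun s => sub_ne_zero.2 (hx s)) r

end NormAlongCurve

theorem HasDerivAt.of_comp_eq {𝕜 E : Type*} [NontriviallyNormedField 𝕜] [CompleteSpace 𝕜]
    [NormedAddCommGroup E] [NormedSpace 𝕜 E] {H F : 𝕜 → E} {g : 𝕜 → 𝕜} {g' t : 𝕜} {F' : E}
    (hg : HasStrictDerivAt g g' t) (hg' : g' ≠ 0) (hF : HasDerivAt F F' t)
    (hHF : ∀ᶠ r in 𝓝 t, H (g r) = F r) : HasDerivAt H (g'⁻¹ • F') (g t) := by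
  set φ := hg.localInverse g g' t hg'
  have hφ : HasDerivAt φ g'⁻¹ (g t) := (hg.to_localInverse hg').hasDerivAt
  have hφt : φ (g t) = t := (hg.eventually_left_inverse hg').self_of_nhds
  have hφlim : Tendsto φ (𝓝 (g t)) (𝓝 t) := by
    simpa only [hφt] using hφ.continuousAt.tendsto
  have hHφ : H =ᶠ[𝓝 (g t)] fun s => F (φ s) := by
    filter_upwards [hg.eventually_right_inverse hg', hφlim.eventually hHF] with s hs hHFs
    rw [← hHFs, hs]
  exact (hF.scomp_of_eq (g t) hφ hφt.symm).congr_of_eventuallyEq hHφ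

theorem hasDerivAt_of_retarded_eq {E : Type*} [NormedAddCommGroup E] [NormedSpace ℝ E]
    {c t : ℝ} {v : ℝ → ℝ} {P H : ℝ → E} {P' : E} (hc : c ≠ 0) (hv : ContDiff ℝ 2 v)
    (hvt : v t ≠ 0) (hvc : c + deriv v t ≠ 0) (hP : HasDerivAt P P' t)
    (hHP : ∀ᶠ r in 𝓝 t, H (r + v r / c) = (c / (4 * Real.pi * v r * (c + deriv v r))) • P r) :
    HasDerivAt H ((c / (4 * Real.pi)) •
      ((c / (v t * (c + deriv v t) ^ 2)) • P' -
        (c * (deriv v t * (c + deriv v t) + v t * deriv (deriv v) t) /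
          (v t ^ 2 * (c + deriv v t) ^ 3)) • P t)) (t + v t / c) := by
  have hv₁ : ∀ r, HasDerivAt v (deriv v r) r := fun r =>
    (hv.differentiable two_ne_zero r).hasDerivAt
  have hv₂ : HasDerivAt (deriv v) (deriv (deriv v) t) t :=
    ((hv.iterate_deriv' 1 1).differentiable one_ne_zero t).hasDerivAt
  have hg : HasStrictDerivAt (fun r => r + v r / c) (1 + deriv v t / c) t :=
    (hasStrictDerivAt_id t).add ((hv.contDiffAt.hasStrictDerivAt two_ne_zero).div_const c)
  have hg' : 1 + deriv v t / c ≠ 0 := by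
    rwa [one_add_div hc, div_ne_zero_iff, and_iff_left hc]
  have hD : HasDerivAt (fun r => 4 * Real.pi * v r * (c + deriv v r))
      (4 * Real.pi * deriv v t * (c + deriv v t) + 4 * Real.pi * v t * deriv (deriv v) t) t :=
    ((hv₁ t).const_mul _).mul (hv₂.const_add c)
  have hDt : 4 * Real.pi * v t * (c + deriv v t) ≠ 0 := by
    have := Real.pi_pos; positivity
  convert (((hasDerivAt_const t c).fun_div hD hDt).smul hP).of_comp_eq hg hg' hHP using 1
  match_scalars
  · field_simp
  · field_simp
    ring

theorem abs_retarded_weight_le {c c₀ d₁ K q p p₂ : ℝ} (hc₀c : c₀ < c) (hd₁ : 0 < d₁)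
    (hq : d₁ ≤ q) (hp : |p| ≤ c₀) (hp₂ : |p₂| ≤ K) :
    |c * (p * (c + p) + q * p₂) / (q ^ 2 * (c + p) ^ 3)| ≤
      c * c₀ / (d₁ ^ 2 * (c - c₀) ^ 2) + c * K / (d₁ * (c - c₀) ^ 3) := by
  have hcc₀ : 0 < c - c₀ := sub_pos.2 hc₀c
  have hcp : c - c₀ ≤ c + p := by linarith [(abs_le.1 hp).1]
  have hc : 0 < c := by linarith [abs_nonneg p]
  have hc₀ : 0 ≤ c₀ := (abs_nonneg p).trans hp
  have hK : 0 ≤ K := (abs_nonneg p₂).trans hp₂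
  have hq₀ : 0 < q := hd₁.trans_le hq
  have hcp₀ : 0 < c + p := hcc₀.trans_le hcp
  calc |c * (p * (c + p) + q * p₂) / (q ^ 2 * (c + p) ^ 3)|
      = c * |p * (c + p) + q * p₂| / (q ^ 2 * (c + p) ^ 3) := by
        rw [abs_div, abs_mul, abs_of_pos hc, abs_of_pos (by positivity : 0 < q ^ 2 * (c + p) ^ 3)]
    _ ≤ c * (|p| * (c + p) + q * |p₂|) / (q ^ 2 * (c + p) ^ 3) := by
        gcongr
        refine (abs_add_le _ _).trans_eq ?_
        rw [abs_mul, abs_mul, abs_of_pos hcp₀, abs_of_pos hq₀]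
    _ = c * |p| / (q ^ 2 * (c + p) ^ 2) + c * |p₂| / (q * (c + p) ^ 3) := by
        field_simp
    _ ≤ c * c₀ / (d₁ ^ 2 * (c - c₀) ^ 2) + c * K / (d₁ * (c - c₀) ^ 3) := by
        gcongr

theorem ninf_retarded_le {c c₀ d₁ K q p p₂ : ℝ} (P P' : E3) (hc₀c : c₀ < c) (hd₁ : 0 < d₁)
    (hq : d₁ ≤ q) (hp : |p| ≤ c₀) (hp₂ : |p₂| ≤ K) :
    ninf ((c / (q * (c + p) ^ 2)) • P' -
        (c * (p * (c + p) + q * p₂) / (q ^ 2 * (c + p) ^ 3)) • P) ≤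
      c / (d₁ * (c - c₀) ^ 2) * ninf P' +
        (c * c₀ / (d₁ ^ 2 * (c - c₀) ^ 2) + c * K / (d₁ * (c - c₀) ^ 3)) * ninf P := by
  have hcp : c - c₀ ≤ c + p := by linarith [(abs_le.1 hp).1]
  have hcc₀ : 0 < c - c₀ := sub_pos.2 hc₀c
  have hq₀ : 0 < q := hd₁.trans_le hq
  have hcp₀ : 0 < c + p := hcc₀.trans_le hcp
  have hc : 0 < c := by linarith [abs_nonneg p]
  have hA : c / (q * (c + p) ^ 2) ≤ c / (d₁ * (c - c₀) ^ 2) := by gcongr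
  refine (ninf_sub_le _ _).trans ?_
  rw [ninf_smul, ninf_smul, abs_of_pos (by positivity)]
  exact add_le_add (mul_le_mul_of_nonneg_right hA (ninf_nonneg _))
    (mul_le_mul_of_nonneg_right (abs_retarded_weight_le hc₀c hd₁ hq hp hp₂) (ninf_nonneg _))

theorem stmt_8_general (c c₀ a₀ d₁ d₀ T' : ℝ)
    (hc₀c : c₀ < c)
    (hd₁ : 0 < d₁)
    (x : E3) (a : ℝ → E3)
    (ha : ContDiff ℝ 2 a)
    (hspeed : ∀ t : ℝ, ‖deriv a t‖ ≤ c₀)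
    (hacc : ∀ t : ℝ, ‖deriv (deriv a) t‖ ≤ a₀)
    (hdist : ∀ t : ℝ, d₁ ≤ ‖x - a t‖ ∧ ‖x - a t‖ ≤ d₀)
    (f : ℝ → E3) (hf : ContDiff ℝ 1 f) (ν : E3)
    (Hν : ℝ → E3) (hH : tangentialField c x a f ν Hν) :
    ∀ t ∈ Set.Ioo (0 : ℝ) T',
      DifferentiableAt ℝ Hν (t + ‖x - a t‖ / c) ∧
      4 * Real.pi / c * ninf (deriv Hν (t + ‖x - a t‖ / c)) ≤
        c / (d₁ * (c - c₀) ^ 2) *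
            sSup ((fun r : ℝ => ninf (deriv (fun r' : ℝ => cross3 (f r') ν) r)) ''
              Set.Icc 0 T') +
        c * c₀ / (d₁ ^ 2 * (c - c₀) ^ 2) *
            sSup ((fun r : ℝ => ninf (cross3 (f r) ν)) '' Set.Icc 0 T') +
        c * (a₀ + 2 * c₀ ^ 2 / d₁) / (d₁ * (c - c₀) ^ 3) *
            sSup ((fun r : ℝ => ninf (cross3 (f r) ν)) '' Set.Icc 0 T') := by
  intro t ht
  have hc : 0 < c := ((norm_nonneg _).trans (hspeed 0)).trans_lt hc₀c
  have hx : ∀ r, x ≠ a r := fun r => sub_ne_zero.1 (norm_pos_iff.1 (hd₁.trans_le (hdist r).1))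
  have hv' : |deriv (fun r => ‖x - a r‖) t| ≤ c₀ :=
    (abs_deriv_norm_sub_le (ha.differentiable two_ne_zero t) (hx t)).trans (hspeed t)
  have hv'' : |deriv (deriv fun r => ‖x - a r‖) t| ≤ a₀ + 2 * c₀ ^ 2 / d₁ := by
    refine (abs_deriv_deriv_norm_sub_le ha hx t).trans ?_
    have : ‖deriv a t‖ ^ 2 / ‖x - a t‖ ≤ 2 * c₀ ^ 2 / d₁ :=
      div_le_div₀ (by positivity) (by nlinarith [hspeed t, norm_nonneg (deriv a t)]) hd₁
        (hdist t).1
    linarith [hacc t]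
  have hP : ∀ r, HasDerivAt (fun r => cross3 (f r) ν) (cross3 (deriv f r) ν) r := fun r =>
    (cross3CLM ν).hasFDerivAt.comp_hasDerivAt r (hf.differentiable one_ne_zero r).hasDerivAt
  have hHν := hasDerivAt_of_retarded_eq hc.ne'
    ((contDiff_const.sub ha).norm ℝ fun r => sub_ne_zero.2 (hx r))
    (norm_ne_zero_iff.2 (sub_ne_zero.2 (hx t))) (by linarith [(abs_le.1 hv').1]) (hP t)
    (by filter_upwards [lt_mem_nhds ht.1] with r hr using hH.2 r hr.le)
  refine ⟨hHν.differentiableAt, ?_⟩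
  have htI : t ∈ Set.Icc 0 T' := Set.Ioo_subset_Icc_self ht
  have hP₀ := (continuous_ninf.comp ((cross3CLM ν).continuous.comp
    hf.continuous)).continuousOn.le_sSup_image_Icc htI
  have hP₁ := (continuous_ninf.comp ((cross3CLM ν).continuous.comp
    (hf.continuous_deriv le_rfl))).continuousOn.le_sSup_image_Icc htI
  rw [funext fun r => (hP r).deriv, hHν.deriv, ninf_smul, abs_of_pos (by positivity), ← mul_assoc,
    show 4 * Real.pi / c * (c / (4 * Real.pi)) = 1 by field_simp, one_mul]
  have hc₀ : 0 ≤ c₀ := (norm_nonneg _).trans (hspeed 0)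
  have ha₀ : 0 ≤ a₀ := (norm_nonneg _).trans (hacc 0)
  refine (ninf_retarded_le _ _ hc₀c hd₁ (hdist t).1 hv' hv'').trans ?_
  rw [add_mul, ← add_assoc]
  gcongr
  exacts [hP₁, hP₀, hP₀]

/-- Differentiability of the tangential field at reparametrized times
`g t`, `t ∈ (0, T')`, together with the bound
`(4π/c) ‖(Hν)' (g t)‖_∞ ≤ (c/(d₁(c−c₀)²)) sup ‖(f ×₃ ν)'‖_∞
  + (c c₀/(d₁²(c−c₀)²)) sup ‖f ×₃ ν‖_∞ + (c(a₀ + 2c₀²/d₁)/(d₁(c−c₀)³)) sup ‖f ×₃ ν‖_∞`,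
where the suprema are over `[0, T']`. -/
theorem stmt_8 (c c₀ a₀ d₁ d₀ T' : ℝ)
    (hc₀ : 0 < c₀) (hc₀c : c₀ < c) (ha₀ : 0 < a₀)
    (hd₁ : 0 < d₁) (hd₁d₀ : d₁ ≤ d₀) (hT' : 0 < T')
    (x : E3) (a : ℝ → E3)
    (ha : ContDiff ℝ 2 a)
    (hspeed : ∀ t : ℝ, ‖deriv a t‖ ≤ c₀)
    (hacc : ∀ t : ℝ, ‖deriv (deriv a) t‖ ≤ a₀)
    (hdist : ∀ t : ℝ, d₁ ≤ ‖x - a t‖ ∧ ‖x - a t‖ ≤ d₀)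
    (f : ℝ → E3) (hf : ContDiff ℝ 1 f) (ν : E3)
    (Hν : ℝ → E3) (hH : tangentialField c x a f ν Hν) :
    ∀ t ∈ Set.Ioo (0 : ℝ) T',
      DifferentiableAt ℝ Hν (t + ‖x - a t‖ / c) ∧
      4 * Real.pi / c * ninf (deriv Hν (t + ‖x - a t‖ / c)) ≤
        c / (d₁ * (c - c₀) ^ 2) *
            sSup ((fun r : ℝ => ninf (deriv (fun r' : ℝ => cross3 (f r') ν) r)) ''
              Set.Icc 0 T') +
        c * c₀ / (d₁ ^ 2 * (c - c₀) ^ 2) *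
            sSup ((fun r : ℝ => ninf (cross3 (f r) ν)) '' Set.Icc 0 T') +
        c * (a₀ + 2 * c₀ ^ 2 / d₁) / (d₁ * (c - c₀) ^ 3) *
            sSup ((fun r : ℝ => ninf (cross3 (f r) ν)) '' Set.Icc 0 T') :=
  stmt_8_general c c₀ a₀ d₁ d₀ T' hc₀c hd₁ x a ha hspeed hacc hdist f hf ν Hν hH
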